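/- In the frontdoor ADMG on {C, X, N} with directed edges C→X and X→N and bidirected edge C↔N, the interventional distribution P(n | do(c)) is identifiable from the observational distribution and equals ∑_x P(x | c) ∑_{c'} P(n | x, c') P(c'), for any strictly positive SCM inducing this graph. -/

import Mathlib

/-!
Every observed variable is a function of the independent latents, and the latents read by `X`
are read by neither `C` nor `N`, since `C ↔ X` and `X ↔ N` are not edges. Hence, under the
product law of the latents, the response of `X` to `C` is independent of the pair formed by `C`
and the response of `N` to `X`. Writing `qX(c, x)` and `qN(x, n)` for the laws of these two
responses, `P(n | do(c)) = ∑ₓ qX(c, x) qN(x, n)`. Observationally `P(x | c) = qX(c, x)`, and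
`P(n | x, c') P(c') = P(C = c', response_N(x) = n)`, whose sum over `c'` is `qN(x, n)`;
positivity keeps the denominators of these conditionals nonzero.
-/

open Classical

noncomputable section

/-- An acyclic directed mixed graph (ADMG): directed edges (causal) and
bidirected edges (latent confounders). -/
structure ADMG (V : Type) where
  dir : V → V → Prop
  bidir : V → V → Prop
  bidir_symm : ∀ a b, bidir a b → bidir b a
  acyclic : ∀ v, ¬ Relation.TransGen dir v v

namespace ADMG

variable {V : Type} [Fintype V] [DecidableEq V]

/-- Observed parents of a set `W`, outside `W`. -/
def parents (G : ADMG V) (W : Set V) : Set V :=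
  {v | v ∉ W ∧ ∃ w ∈ W, G.dir v w}

/-- Observed parents of a finite set `W`, outside `W`. -/
def parentsF (G : ADMG V) (W : Finset V) : Finset V :=
  Finset.univ.filter fun v => v ∉ W ∧ ∃ w ∈ W, G.dir v w

/-- Ancestors of a set `W` (including `W` itself). -/
def ancestors (G : ADMG V) (W : Set V) : Set V :=
  {v | ∃ w ∈ W, Relation.ReflTransGen G.dir v w}

/-- Ancestors of a finite set `W` (including `W` itself). -/
def ancestorsF (G : ADMG V) (W : Finset V) : Finset V :=
  Finset.univ.filter fun v => ∃ w ∈ W, Relation.ReflTransGen G.dir v w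

/-- Bidirected connectivity (paths of bidirected edges). -/
def biConn (G : ADMG V) (a b : V) : Prop :=
  Relation.ReflTransGen G.bidir a b

/-- `C` is a c-component of `G`: a maximal bidirected-connected set. -/
def isCComponent (G : ADMG V) (C : Set V) : Prop :=
  C.Nonempty ∧ (∀ a ∈ C, ∀ b ∈ C, G.biConn a b) ∧
    ∀ a ∈ C, ∀ b, G.biConn a b → b ∈ C

/-- The set of c-components of `G`. -/
def cComponents (G : ADMG V) : Set (Set V) := {C | G.isCComponent C}

/-- The graph after `do(I)`: incoming directed edges into `I` and bidirected
edges incident to `I` are removed. -/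
def doGraph (G : ADMG V) (I : Set V) : ADMG V where
  dir a b := G.dir a b ∧ b ∉ I
  bidir a b := G.bidir a b ∧ a ∉ I ∧ b ∉ I
  bidir_symm := fun a b h => ⟨G.bidir_symm a b h.1, h.2.2, h.2.1⟩
  acyclic := fun v h => G.acyclic v (Relation.TransGen.mono (p := G.dir) (fun _ _ hx => hx.1) _ _ h)

/-- The graph with all outgoing directed edges of `X` removed. -/
def underGraph (G : ADMG V) (X : Set V) : ADMG V where
  dir a b := G.dir a b ∧ a ∉ X
  bidir := G.bidir
  bidir_symm := G.bidir_symm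
  acyclic := fun v h => G.acyclic v (Relation.TransGen.mono (p := G.dir) (fun _ _ hx => hx.1) _ _ h)

/-- The induced sub-graph on a vertex set `S`. -/
def induced (G : ADMG V) (S : Set V) : ADMG V where
  dir a b := G.dir a b ∧ a ∈ S ∧ b ∈ S
  bidir a b := G.bidir a b ∧ a ∈ S ∧ b ∈ S
  bidir_symm := fun a b h => ⟨G.bidir_symm a b h.1, h.2.2, h.2.1⟩
  acyclic := fun v h => G.acyclic v (Relation.TransGen.mono (p := G.dir) (fun _ _ hx => hx.1) _ _ h)

/-- Adjacency in the mixed graph. -/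
def adjacent (G : ADMG V) (a b : V) : Prop := G.dir a b ∨ G.dir b a ∨ G.bidir a b

/-- The edge between `a` and `b` points into `b`. -/
def intoEdge (G : ADMG V) (a b : V) : Prop := G.dir a b ∨ G.bidir a b

/-- `b` is a collider on the consecutive triple `a, b, c`. -/
def isCollider (G : ADMG V) (a b c : V) : Prop := G.intoEdge a b ∧ G.intoEdge c b

/-- A walk (list of vertices) that is active given the conditioning set `Z`:
non-colliders avoid `Z`, colliders have a descendant in `Z`. -/
def ActiveWalk (G : ADMG V) (Z : Set V) (p : List V) : Prop :=
  p.Chain' G.adjacent ∧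
    ∀ i a b c, p[i]? = some a → p[i + 1]? = some b → p[i + 2]? = some c →
      (G.isCollider a b c → ∃ z ∈ Z, Relation.ReflTransGen G.dir b z) ∧
      (¬ G.isCollider a b c → b ∉ Z)

/-- d-connection of `X` and `Y` given `Z` in the mixed graph (m-connection). -/
def dConnected (G : ADMG V) (X Y Z : Set V) : Prop :=
  ∃ p : List V, G.ActiveWalk Z p ∧
    (∃ x ∈ X, p.head? = some x) ∧ ∃ y ∈ Y, p.getLast? = some y

/-- d-separation of `X` and `Y` given `Z`. -/
def dSeparated (G : ADMG V) (X Y Z : Set V) : Prop := ¬ G.dConnected X Y Z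

end ADMG

/-- A (semi-Markovian) structural causal model over the ADMG `G`, with observed
variables valued in `Val`: independent finite latents `L`, mechanisms `f`
reading only observed parents and own latents (shared latents forcing a
bidirected edge), and the solution map of the structural equations under an
intervention. -/
structure SCM (V : Type) (Val : Type) [Fintype V] [DecidableEq V] [Fintype Val]
    (G : ADMG V) where
  L : Type
  [fintL : Fintype L]
  [decL : DecidableEq L]
  NVal : Type
  [fintN : Fintype NVal]
  ν : L → NVal → ℝ
  ν_nonneg : ∀ l x, 0 ≤ ν l x
  ν_sum : ∀ l, ∑ x, ν l x = 1
  reads : V → L → Prop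
  semiMarkov : ∀ v w l, v ≠ w → reads v l → reads w l → G.bidir v w
  f : V → (V → Val) → (L → NVal) → Val
  f_parents : ∀ v x y ω, (∀ p, G.dir p v → x p = y p) → f v x ω = f v y ω
  f_latents : ∀ v x ω ω', (∀ l, reads v l → ω l = ω' l) → f v x ω = f v x ω'
  solve : Finset V → (V → Val) → (L → NVal) → V → Val
  solve_spec : ∀ I x ω v,
    solve I x ω v = if v ∈ I then x v else f v (solve I x ω) ω

namespace SCM

attribute [instance] SCM.fintL SCM.decL SCM.fintN

variable {V Val : Type} [Fintype V] [DecidableEq V] [Fintype Val] {G : ADMG V}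

/-- Probability of a full latent configuration (latents are independent). -/
def μ (M : SCM V Val G) (ω : M.L → M.NVal) : ℝ := ∏ l, M.ν l (ω l)

/-- The interventional distribution `P(y | do(I := x))` (observational for `I = ∅`). -/
def P (M : SCM V Val G) (I : Finset V) (x : V → Val) (y : V → Val) : ℝ :=
  ∑ ω : M.L → M.NVal, if M.solve I x ω = y then M.μ ω else 0

/-- The marginal interventional distribution `P(S = y|_S | do(I := x))`. -/
def Pm (M : SCM V Val G) (I : Finset V) (x : V → Val) (S : Finset V) (y : V → Val) : ℝ :=
  ∑ z : V → Val, if ∀ v ∈ S, z v = y v then M.P I x z else 0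

/-- The conditional distribution `P(S = y|_S | C = y|_C, do(I := x))`. -/
def cond (M : SCM V Val G) (I : Finset V) (x : V → Val) (S C : Finset V)
    (y : V → Val) : ℝ :=
  M.Pm I x (S ∪ C) y / M.Pm I x C y

/-- Strict positivity of the induced observational distribution. -/
def positive (M : SCM V Val G) : Prop := ∀ x y, 0 < M.P ∅ x y

end SCM

end


/-- The frontdoor ADMG on `{C = 0, X = 1, N = 2}` with directed edges `C → X`,
`X → N` and bidirected edge `C ↔ N`. -/
def Gfd : ADMG (Fin 3) where
  dir a b := (a = 0 ∧ b = 1) ∨ (a = 1 ∧ b = 2)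
  bidir a b := (a = 0 ∧ b = 2) ∨ (a = 2 ∧ b = 0)
  bidir_symm := by decide
  acyclic := by
    intro v h
    have h2 : Relation.TransGen
        (fun a b : Fin 3 => (![0, 1, 2] : Fin 3 → ℕ) a < ![0, 1, 2] b) v v :=
      Relation.TransGen.mono (r := fun a b : Fin 3 => (a = 0 ∧ b = 1) ∨ (a = 1 ∧ b = 2))
        (fun a b hab => by revert a b hab; decide) _ _ h
    have htr : Transitive
        (fun a b : Fin 3 => (![0, 1, 2] : Fin 3 → ℕ) a < ![0, 1, 2] b) :=
      fun _ _ _ hab hbc => lt_trans hab hbc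
    rw [@Relation.transGen_eq_self _ _ ⟨htr⟩] at h2
    exact lt_irrefl _ h2

section ProductWeights

variable {ι α : Type*} [Fintype ι] [DecidableEq ι] [Fintype α]

theorem Fintype.sum_prod_mul_domRestrict_mul_domRestrict (ν : ι → α → ℝ) (s : Set ι)
    (f : (s → α) → ℝ) (g : (↥sᶜ → α) → ℝ) :
    ∑ ω : ι → α, (∏ i, ν i (ω i)) * (f (s.domRestrict ω) * g (sᶜ.domRestrict ω)) =
      (∑ a : s → α, (∏ i : s, ν i (a i)) * f a) * ∑ b : ↥sᶜ → α, (∏ i : ↥sᶜ, ν i (b i)) * g b := by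
  let e := Equiv.piEquivPiSubtypeProd (· ∈ s) (fun _ => α)
  rw [← e.symm.sum_comp, Fintype.sum_prod_type, Finset.sum_mul_sum]
  refine Finset.sum_congr rfl fun a _ => Finset.sum_congr rfl fun b _ => ?_
  have ha : s.domRestrict (e.symm (a, b)) = a := funext fun i => by simp [e, i.2]
  have hb : sᶜ.domRestrict (e.symm (a, b)) = b :=
    funext fun i => by simp [e, show (i : ι) ∉ s from i.2]
  have hν : ∏ i, ν i (e.symm (a, b) i) =
      (∏ i : s, ν i (s.domRestrict (e.symm (a, b)) i)) *
        ∏ i : ↥sᶜ, ν i (sᶜ.domRestrict (e.symm (a, b)) i) :=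
    (Fintype.prod_subtype_mul_prod_subtype (· ∈ s) _).symm
  rw [hν, ha, hb]
  ring

theorem Fintype.sum_prod_mul_mul_of_dependsOn {ν : ι → α → ℝ} (hν : ∀ i, ∑ a, ν i a = 1)
    {s : Set ι} {F G : (ι → α) → ℝ} (hF : DependsOn F s) (hG : DependsOn G sᶜ) :
    ∑ ω, (∏ i, ν i (ω i)) * (F ω * G ω) =
      (∑ ω, (∏ i, ν i (ω i)) * F ω) * ∑ ω, (∏ i, ν i (ω i)) * G ω := by
  obtain ⟨f, rfl⟩ := dependsOn_iff_exists_comp.mp hF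
  obtain ⟨g, rfl⟩ := dependsOn_iff_exists_comp.mp hG
  have hmass : ∀ (t : Set ι) [Fintype t], ∑ a : t → α, ∏ i : t, ν i (a i) = 1 := fun t _ => by
    rw [← Fintype.prod_sum (fun (i : t) a => ν i a)]
    exact Finset.prod_eq_one fun i _ => hν i
  have hF' := sum_prod_mul_domRestrict_mul_domRestrict ν s f 1
  have hG' := sum_prod_mul_domRestrict_mul_domRestrict ν s 1 g
  simp only [Pi.one_apply, mul_one, one_mul, hmass] at hF' hG'
  simp only [Function.comp_apply, hF', hG', sum_prod_mul_domRestrict_mul_domRestrict]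

end ProductWeights

namespace SCM

variable {V Val : Type} [Fintype V] [DecidableEq V] [Fintype Val] {G : ADMG V}
  (M : SCM V Val G)

noncomputable def latentProb (A : (M.L → M.NVal) → Prop) : ℝ :=
  ∑ ω, if A ω then M.μ ω else 0

variable {M}

theorem latentProb_congr {A B : (M.L → M.NVal) → Prop} (h : ∀ ω, A ω ↔ B ω) :
    M.latentProb A = M.latentProb B := by
  simp only [latentProb, h]

theorem latentProb_and_of_dependsOn {A B : (M.L → M.NVal) → Prop} {s t : Set M.L}
    (hA : DependsOn A s) (hB : DependsOn B t) (hst : Disjoint s t) :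
    M.latentProb (fun ω => A ω ∧ B ω) = M.latentProb A * M.latentProb B := by
  replace hB : DependsOn B sᶜ := hB.mono hst.subset_compl_left
  have key := Fintype.sum_prod_mul_mul_of_dependsOn M.ν_sum (s := s)
    (F := fun ω => if A ω then (1 : ℝ) else 0) (G := fun ω => if B ω then (1 : ℝ) else 0)
    (fun ω ω' h => by simp only [hA h]) (fun ω ω' h => by simp only [hB h])
  simp only [latentProb, μ]
  convert key using 3 <;> split_ifs <;> simp_all

theorem sum_latentProb_eq_and {β : Type} [Fintype β] (h : (M.L → M.NVal) → β)
    (B : β → (M.L → M.NVal) → Prop) :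
    ∑ b, M.latentProb (fun ω => h ω = b ∧ B b ω) = M.latentProb (fun ω => B (h ω) ω) := by
  simp only [latentProb]
  rw [Finset.sum_comm]
  refine Finset.sum_congr rfl fun ω _ => ?_
  rw [Finset.sum_eq_single (h ω)] <;> aesop

theorem Pm_eq_latentProb (I : Finset V) (x : V → Val) (S : Finset V) (y : V → Val) :
    M.Pm I x S y = M.latentProb (fun ω => ∀ v ∈ S, M.solve I x ω v = y v) := by
  simp only [Pm, P, latentProb, Finset.ite_sum_zero]
  rw [Finset.sum_comm]
  refine Finset.sum_congr rfl fun ω _ => ?_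
  rw [Finset.sum_eq_single (M.solve I x ω)] <;> aesop

theorem Pm_pos (hpos : M.positive) (x : V → Val) (S : Finset V) (y : V → Val) :
    0 < M.Pm ∅ x S y :=
  calc 0 < M.P ∅ x y := hpos x y
    _ = if ∀ v ∈ S, y v = y v then M.P ∅ x y else 0 := by simp
    _ ≤ M.Pm ∅ x S y := Finset.single_le_sum
          (f := fun z => if ∀ v ∈ S, z v = y v then M.P ∅ x z else 0)
          (fun z _ => by split_ifs <;> simp [(hpos x z).le]) (Finset.mem_univ y)

theorem solve_of_mem {I : Finset V} {v : V} (hv : v ∈ I) (x : V → Val) (ω : M.L → M.NVal) :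
    M.solve I x ω v = x v := by
  rw [M.solve_spec, if_pos hv]

theorem solve_of_notMem {I : Finset V} {v : V} (hv : v ∉ I) (x y : V → Val) (ω : M.L → M.NVal)
    (hy : ∀ p, G.dir p v → y p = M.solve I x ω p) : M.solve I x ω v = M.f v y ω := by
  rw [M.solve_spec, if_neg hv]
  exact M.f_parents v _ _ ω fun p hp => (hy p hp).symm

variable (M) in
theorem f_dependsOn (v : V) (y : V → Val) : DependsOn (M.f v y) {l | M.reads v l} :=
  fun _ _ h => M.f_latents v y _ _ h

variable (M) in
theorem disjoint_reads {v w : V} (hvw : v ≠ w) (hb : ¬ G.bidir v w) :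
    Disjoint {l | M.reads v l} {l | M.reads w l} :=
  Set.disjoint_left.mpr fun l hv hw => hb (M.semiMarkov v w l hvw hv hw)

end SCM

theorem Gfd_not_dir_zero (p : Fin 3) : ¬ Gfd.dir p 0 := by simp [Gfd]

theorem Gfd_dir_one {p : Fin 3} (h : Gfd.dir p 1) : p = 0 := by simpa [Gfd] using h

theorem Gfd_dir_two {p : Fin 3} (h : Gfd.dir p 2) : p = 1 := by simpa [Gfd] using h

theorem Gfd_not_bidir_zero_one : ¬ Gfd.bidir 0 1 := by simp [Gfd]

theorem Gfd_not_bidir_two_one : ¬ Gfd.bidir 2 1 := by simp [Gfd]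

namespace SCM

variable {Val : Type} [Fintype Val] (M : SCM (Fin 3) Val Gfd)

def responseX (c : Val) : (M.L → M.NVal) → Val := M.f 1 fun _ => c

def responseN (x : Val) : (M.L → M.NVal) → Val := M.f 2 fun _ => x

variable {M}

theorem solve_zero {I : Finset (Fin 3)} (hI : 0 ∉ I) (x : Fin 3 → Val) (ω : M.L → M.NVal) :
    M.solve I x ω 0 = M.f 0 x ω :=
  M.solve_of_notMem hI x x ω fun p hp => absurd hp (Gfd_not_dir_zero p)

theorem solve_one {I : Finset (Fin 3)} (hI : 1 ∉ I) (x : Fin 3 → Val) (ω : M.L → M.NVal) :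
    M.solve I x ω 1 = M.responseX (M.solve I x ω 0) ω :=
  M.solve_of_notMem hI x _ ω fun p hp => by rw [Gfd_dir_one hp]

theorem solve_two {I : Finset (Fin 3)} (hI : 2 ∉ I) (x : Fin 3 → Val) (ω : M.L → M.NVal) :
    M.solve I x ω 2 = M.responseN (M.solve I x ω 1) ω :=
  M.solve_of_notMem hI x _ ω fun p hp => by rw [Gfd_dir_two hp]

variable (M) in
theorem dependsOn_responseX (c : Val) : DependsOn (M.responseX c) {l | M.reads 1 l} :=
  M.f_dependsOn 1 _

variable (M) in
theorem dependsOn_responseN (x : Val) : DependsOn (M.responseN x) {l | M.reads 2 l} :=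
  M.f_dependsOn 2 _

theorem Pm_zero (x y : Fin 3 → Val) :
    M.Pm ∅ x {0} y = M.latentProb fun ω => M.f 0 x ω = y 0 := by
  rw [Pm_eq_latentProb]
  exact latentProb_congr fun ω => by simp [solve_zero]

theorem Pm_zero_one (x y : Fin 3 → Val) :
    M.Pm ∅ x {0, 1} y =
      M.Pm ∅ x {0} y * M.latentProb fun ω => M.responseX (y 0) ω = y 1 := by
  rw [Pm_eq_latentProb, Pm_zero, ← latentProb_and_of_dependsOn
    (fun ω ω' h => by rw [M.f_dependsOn 0 x h]) (fun ω ω' h => by rw [M.dependsOn_responseX _ h])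
    (M.disjoint_reads (by decide) Gfd_not_bidir_zero_one)]
  exact latentProb_congr fun ω => by simp +contextual [solve_one, solve_zero]

theorem Pm_zero_one_two (x y : Fin 3 → Val) :
    M.Pm ∅ x ({2} ∪ {0, 1}) y =
      (M.latentProb fun ω => M.f 0 x ω = y 0 ∧ M.responseN (y 1) ω = y 2) *
        M.latentProb fun ω => M.responseX (y 0) ω = y 1 := by
  have hCN : DependsOn (fun ω => M.f 0 x ω = y 0 ∧ M.responseN (y 1) ω = y 2)
      ({l | M.reads 0 l} ∪ {l | M.reads 2 l}) := fun ω ω' h => by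
    dsimp only
    rw [M.f_dependsOn 0 x fun l hl => h l (Or.inl hl),
      M.dependsOn_responseN _ fun l hl => h l (Or.inr hl)]
  rw [Pm_eq_latentProb, ← latentProb_and_of_dependsOn hCN
    (fun ω ω' h => by rw [M.dependsOn_responseX _ h])
    ((M.disjoint_reads (by decide) Gfd_not_bidir_zero_one).union_left
      (M.disjoint_reads (by decide) Gfd_not_bidir_two_one))]
  refine latentProb_congr fun ω => ?_
  simp only [Finset.mem_union, Finset.mem_insert, Finset.mem_singleton, forall_eq_or_imp,
    forall_eq, Finset.notMem_empty, not_false_eq_true, solve_two, solve_one, solve_zero]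
  grind

theorem Pm_do_zero_two (x y : Fin 3 → Val) :
    M.Pm {0} x {2} y = ∑ x', (M.latentProb fun ω => M.responseX (x 0) ω = x') *
      M.latentProb fun ω => M.responseN x' ω = y 2 := by
  rw [Pm_eq_latentProb, latentProb_congr (B := fun ω => M.responseN (M.responseX (x 0) ω) ω = y 2)
      fun ω => by simp [solve_two, solve_one, solve_of_mem],
    ← sum_latentProb_eq_and (M.responseX (x 0)) fun x' ω => M.responseN x' ω = y 2]
  exact Finset.sum_congr rfl fun x' _ => latentProb_and_of_dependsOn
    (fun ω ω' h => by rw [M.dependsOn_responseX _ h])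
    (fun ω ω' h => by rw [M.dependsOn_responseN _ h])
    (M.disjoint_reads (by decide) Gfd_not_bidir_two_one).symm

theorem cond_one_zero (hpos : M.positive) (x y : Fin 3 → Val) :
    M.cond ∅ x {1} {0} y = M.latentProb fun ω => M.responseX (y 0) ω = y 1 := by
  rw [cond, show ({1} ∪ {0} : Finset (Fin 3)) = {0, 1} by decide, Pm_zero_one,
    mul_div_cancel_left₀ _ (Pm_pos hpos x _ y).ne']

theorem cond_two_zero_one_mul_Pm_zero (hpos : M.positive) (x y : Fin 3 → Val) :
    M.cond ∅ x {2} {0, 1} y * M.Pm ∅ x {0} y =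
      M.latentProb fun ω => M.f 0 x ω = y 0 ∧ M.responseN (y 1) ω = y 2 := by
  have hC := (Pm_pos hpos x {0} y).ne'
  have hCX := (Pm_pos hpos x {0, 1} y).ne'
  rw [Pm_zero_one] at hCX
  rw [cond, Pm_zero_one_two, Pm_zero_one]
  field_simp [right_ne_zero_of_mul hCX]

end SCM

/-- the frontdoor adjustment formula: in `Gfd`, for any strictly
positive SCM, `P(n | do(c)) = ∑ₓ P(x | c) ∑_{c'} P(n | x, c') P(c')`. -/
theorem frontdoor_adjustment
    {Val : Type} [Fintype Val]
    (M : SCM (Fin 3) Val Gfd) (hpos : M.positive) (cv nv : Val) :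
    M.Pm ({0} : Finset (Fin 3)) (fun _ => cv) ({2} : Finset (Fin 3)) (fun _ => nv) =
      ∑ xv : Val,
        M.cond ∅ (fun _ => cv) ({1} : Finset (Fin 3)) ({0} : Finset (Fin 3)) ![cv, xv, nv] *
          ∑ cv' : Val,
            M.cond ∅ (fun _ => cv) ({2} : Finset (Fin 3)) ({0, 1} : Finset (Fin 3))
                ![cv', xv, nv] *
              M.Pm ∅ (fun _ => cv) ({0} : Finset (Fin 3)) ![cv', xv, nv] := by
  rw [M.Pm_do_zero_two]
  refine Finset.sum_congr rfl fun xv _ => ?_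
  simp only [SCM.cond_two_zero_one_mul_Pm_zero hpos, SCM.cond_one_zero hpos,
    Matrix.cons_val_zero, Matrix.cons_val_one, Matrix.cons_val_two, Matrix.tail_cons,
    Matrix.head_cons]
  rw [SCM.sum_latentProb_eq_and (M.f 0 _) (fun _ ω => M.responseN xv ω = nv)]
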